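/- For d > e, the function α ↦ 1 − exp(−d(1−α)) has a unique fixed point β in (0,1); this β lies in the interval [α_*(d), α^*(d)], it satisfies 1 − β = exp(−d(1−β)), and Φ_d attains its unique local minimum on [α_*(d), α^*(d)] at β. -/

import Mathlib

open Filter Topology MeasureTheory ProbabilityTheory

noncomputable section

/-- `φ_d(α) = 1 − exp(−d·exp(−d(1−α)))`. -/
def phiFn (d α : ℝ) : ℝ := 1 - Real.exp (-d * Real.exp (-d * (1 - α)))

/-- `Φ_d(α) = exp(−d·exp(−d(1−α))) + (1 + d(1−α))·exp(−d(1−α)) − 1`. -/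
def PhiFn (d α : ℝ) : ℝ :=
  Real.exp (-d * Real.exp (-d * (1 - α))) + (1 + d * (1 - α)) * Real.exp (-d * (1 - α)) - 1

/-- `α_*(d)`: the smallest fixed point of `φ_d` in `[0,1]`. -/
def alphaMin (d : ℝ) : ℝ := sInf {α : ℝ | α ∈ Set.Icc (0:ℝ) 1 ∧ phiFn d α = α}

/-- `α^*(d)`: the largest fixed point of `φ_d` in `[0,1]`. -/
def alphaMax (d : ℝ) : ℝ := sSup {α : ℝ | α ∈ Set.Icc (0:ℝ) 1 ∧ phiFn d α = α}

/-- `α_0(d)`: for `d ≤ e` equal to `α_*(d)`; for `d > e` the unique fixed point of `φ_d`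
in the open interval `(α_*(d), α^*(d))`. -/
def alphaMid (d : ℝ) : ℝ :=
  if d ≤ Real.exp 1 then alphaMin d
  else sInf {α : ℝ | α ∈ Set.Ioo (alphaMin d) (alphaMax d) ∧ phiFn d α = α}

/-!
The fixed point `β` of `h(α) = 1 − exp(−d(1−α))` is also a fixed point of `φ_d = h ∘ h`, and for
`d > e` a repelling one: `φ_d'(β) = (d(1−β))² > 1`. The map `φ_d − id` is strictly convex left of
`1 − log d / d` and strictly concave right of it; as it vanishes at `α_*`, `β`, `α^*` and crosses
zero upwards at `β`, it is negative on `(α_*, β)` and positive on `(β, α^*)`. Since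
`Φ_d'(α) = d² exp(−d(1−α)) (φ_d(α) − α)`, `Φ_d` decreases on `[α_*, β]` and increases on
`[β, α^*]`.
-/

open Real Set

section Inflection

variable {f : ℝ → ℝ} {a p q f' : ℝ}

theorem neg_of_mem_Ioo_of_strictConvexOn_Iic_of_concaveOn_Ici
    (hconv : StrictConvexOn ℝ (Iic a) f) (hconc : ConcaveOn ℝ (Ici a) f)
    (hp : f p = 0) (hq : f q = 0) (hf' : HasDerivAt f f' q) (hf'_pos : 0 < f') :
    ∀ x ∈ Ioo p q, f x < 0 := by
  have below_tangent : ∀ y ∈ Ico a q, f y < 0 := by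
    intro y hy
    have h := hconc.le_slope_of_hasDerivAt hy.1 (hy.1.trans hy.2.le) hy.2 hf'
    rw [slope_def_field, hq] at h
    have hy' : 0 < q - y := sub_pos.mpr hy.2
    by_contra! hfy
    linarith [div_nonpos_of_nonpos_of_nonneg (by linarith : 0 - f y ≤ 0) hy'.le]
  have below_chord : ∀ r ∈ Iic a, f r ≤ 0 → ∀ x ∈ Ioo p r, f x < 0 := by
    intro r hr hfr x hx
    have hpr : p < r := hx.1.trans hx.2
    have h := hconv.lt_on_openSegment (hpr.le.trans hr : p ∈ Iic a) hr hpr.ne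
      (Ioo_subset_openSegment hx)
    rw [hp] at h
    exact h.trans_le (max_le le_rfl hfr)
  intro x hx
  rcases le_or_gt q a with hqa | haq
  · exact below_chord q hqa hq.le x hx
  rcases lt_or_ge x a with hxa | hax
  · exact below_chord a self_mem_Iic (below_tangent a ⟨le_rfl, haq⟩).le x ⟨hx.1, hxa⟩
  · exact below_tangent x ⟨hax, hx.2⟩

theorem pos_of_mem_Ioo_of_convexOn_Iic_of_strictConcaveOn_Ici
    (hconv : ConvexOn ℝ (Iic a) f) (hconc : StrictConcaveOn ℝ (Ici a) f)
    (hp : f p = 0) (hq : f q = 0) (hf' : HasDerivAt f f' p) (hf'_pos : 0 < f') :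
    ∀ x ∈ Ioo p q, 0 < f x := by
  have above_tangent : ∀ y ∈ Ioc p a, 0 < f y := by
    intro y hy
    have h := hconv.le_slope_of_hasDerivAt (hy.1.le.trans hy.2) hy.2 hy.1 hf'
    rw [slope_def_field, hp, sub_zero] at h
    have hy' : 0 < y - p := sub_pos.mpr hy.1
    by_contra! hfy
    linarith [div_nonpos_of_nonpos_of_nonneg hfy hy'.le]
  have above_chord : ∀ r ∈ Ici a, 0 ≤ f r → ∀ x ∈ Ioo r q, 0 < f x := by
    intro r hr hfr x hx
    have hrq : r < q := hx.1.trans hx.2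
    have h := hconc.lt_on_openSegment hr (hr.trans hrq.le : q ∈ Ici a) hrq.ne
      (Ioo_subset_openSegment hx)
    rw [hq] at h
    exact (le_min hfr le_rfl).trans_lt h
  intro x hx
  rcases le_or_gt a p with hap | hpa
  · exact above_chord p hap hp.ge x hx
  rcases lt_or_ge a x with hax | hxa
  · exact above_chord a self_mem_Ici (above_tangent a ⟨hpa, le_rfl⟩).le x ⟨hax, hx.2⟩
  · exact above_tangent x ⟨hx.1, hxa⟩

end Inflection

theorem isLocalMinOn_Icc_iff_of_strictAntiOn_of_strictMonoOn {f : ℝ → ℝ} {a b c x : ℝ}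
    (hanti : StrictAntiOn f (Icc a b)) (hmono : StrictMonoOn f (Icc b c)) (hb : b ∈ Icc a c)
    (hx : x ∈ Icc a c) : IsLocalMinOn f (Icc a c) x ↔ x = b := by
  constructor
  · intro hmin
    by_contra hxb
    rcases lt_or_gt_of_ne hxb with hlt | hgt
    · have hsub : Ioo x b ⊆ Icc a c := fun y hy => ⟨hx.1.trans hy.1.le, hy.2.le.trans hb.2⟩
      have hev : ∀ᶠ y in 𝓝[>] x, f x ≤ f y ∧ y ∈ Ioo x b := by
        rw [← nhdsWithin_Ioo_eq_nhdsGT hlt]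
        exact (hmin.filter_mono (nhdsWithin_mono x hsub)).and self_mem_nhdsWithin
      obtain ⟨y, hle, hy⟩ := hev.exists
      exact (hanti ⟨hx.1, hlt.le⟩ ⟨hx.1.trans hy.1.le, hy.2.le⟩ hy.1).not_ge hle
    · have hsub : Ioo b x ⊆ Icc a c := fun y hy => ⟨hb.1.trans hy.1.le, hy.2.le.trans hx.2⟩
      have hev : ∀ᶠ y in 𝓝[<] x, f x ≤ f y ∧ y ∈ Ioo b x := by
        rw [← nhdsWithin_Ioo_eq_nhdsLT hgt]
        exact (hmin.filter_mono (nhdsWithin_mono x hsub)).and self_mem_nhdsWithin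
      obtain ⟨y, hle, hy⟩ := hev.exists
      exact (hmono ⟨hy.1.le, hy.2.le.trans hx.2⟩ ⟨hgt.le, hx.2⟩ hy.2).not_ge hle
  · rintro rfl
    refine IsMinOn.localize fun y hy => ?_
    rcases le_total y x with hyx | hxy
    · exact hanti.antitoneOn ⟨hy.1, hyx⟩ ⟨hb.1, le_rfl⟩ hyx
    · exact hmono.monotoneOn ⟨le_rfl, hb.2⟩ ⟨hxy, hy.2⟩ hxy

section Calculus

variable (d : ℝ)

def phiDeriv (α : ℝ) : ℝ := d ^ 2 * exp (-d * (1 - α)) * exp (-d * exp (-d * (1 - α)))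

theorem hasDerivAt_exp_neg_mul_one_sub (α : ℝ) :
    HasDerivAt (fun x => exp (-d * (1 - x))) (d * exp (-d * (1 - α))) α := by
  have h : HasDerivAt (fun x : ℝ => -d * (1 - x)) d α := by
    simpa using ((hasDerivAt_id α).const_sub 1).const_mul (-d)
  simpa [mul_comm] using h.exp

theorem hasDerivAt_phiFn (α : ℝ) : HasDerivAt (phiFn d) (phiDeriv d α) α := by
  have h := (((hasDerivAt_exp_neg_mul_one_sub d α).const_mul (-d)).exp).const_sub 1
  exact h.congr_deriv (by unfold phiDeriv; ring)

theorem hasDerivAt_phiDeriv (α : ℝ) :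
    HasDerivAt (phiDeriv d) (d * phiDeriv d α * (1 - d * exp (-d * (1 - α)))) α := by
  have hE := hasDerivAt_exp_neg_mul_one_sub d α
  have h := (hE.const_mul (d ^ 2)).mul (hE.const_mul (-d)).exp
  exact h.congr_deriv (by unfold phiDeriv; ring)

theorem hasDerivAt_PhiFn (α : ℝ) :
    HasDerivAt (PhiFn d) (d ^ 2 * exp (-d * (1 - α)) * (phiFn d α - α)) α := by
  have hE := hasDerivAt_exp_neg_mul_one_sub d α
  have hlin : HasDerivAt (fun x : ℝ => 1 + d * (1 - x)) (-d) α := by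
    simpa using (((hasDerivAt_id α).const_sub 1).const_mul d).const_add 1
  have h := (((hE.const_mul (-d)).exp).add (hlin.mul hE)).sub_const 1
  exact h.congr_deriv (by unfold phiFn; ring)

theorem deriv2_phiFn_sub_id (α : ℝ) :
    deriv^[2] (fun x => phiFn d x - x) α = d * phiDeriv d α * (1 - d * exp (-d * (1 - α))) := by
  have h : deriv (fun x => phiFn d x - x) = fun x => phiDeriv d x - 1 :=
    funext fun x => ((hasDerivAt_phiFn d x).sub (hasDerivAt_id x)).deriv
  simp only [Function.iterate_succ, Function.iterate_zero, Function.comp_apply, id, h]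
  exact ((hasDerivAt_phiDeriv d α).sub_const 1).deriv

end Calculus

section Convexity

variable {d : ℝ}

theorem strictMono_mul_exp_neg_mul_one_sub (hd : 0 < d) :
    StrictMono fun x => d * exp (-d * (1 - x)) :=
  fun x y hxy => mul_lt_mul_of_pos_left (exp_lt_exp.mpr (by nlinarith)) hd

theorem mul_exp_neg_mul_one_sub_inflection (hd : 0 < d) :
    d * exp (-d * (1 - (1 - log d / d))) = 1 := by
  rw [show -d * (1 - (1 - log d / d)) = -log d by field_simp; ring, exp_neg, exp_log hd,
    mul_inv_cancel₀ hd.ne']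

theorem strictConvexOn_phiFn_sub_id (hd : 0 < d) :
    StrictConvexOn ℝ (Iic (1 - log d / d)) fun x => phiFn d x - x := by
  refine strictConvexOn_of_deriv2_pos (convex_Iic _) (by unfold phiFn; fun_prop) fun x hx => ?_
  rw [interior_Iic] at hx
  have hdE : d * exp (-d * (1 - x)) < 1 := by
    simpa only [mul_exp_neg_mul_one_sub_inflection hd] using
      strictMono_mul_exp_neg_mul_one_sub hd hx
  rw [deriv2_phiFn_sub_id]
  have : 0 < phiDeriv d x := by unfold phiDeriv; positivity
  have := mul_pos hd this
  nlinarith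

theorem strictConcaveOn_phiFn_sub_id (hd : 0 < d) :
    StrictConcaveOn ℝ (Ici (1 - log d / d)) fun x => phiFn d x - x := by
  refine strictConcaveOn_of_deriv2_neg (convex_Ici _) (by unfold phiFn; fun_prop) fun x hx => ?_
  rw [interior_Ici] at hx
  have hdE : 1 < d * exp (-d * (1 - x)) := by
    simpa only [mul_exp_neg_mul_one_sub_inflection hd] using
      strictMono_mul_exp_neg_mul_one_sub hd hx
  rw [deriv2_phiFn_sub_id]
  have : 0 < phiDeriv d x := by unfold phiDeriv; positivity
  have := mul_pos hd this
  nlinarith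

end Convexity

section FixedPoints

variable {d β : ℝ}

theorem existsUnique_fixedPoint_one_sub_exp (hd : 0 < d) :
    ∃! β, β ∈ Ioo 0 1 ∧ 1 - exp (-d * (1 - β)) = β := by
  set k : ℝ → ℝ := fun x => 1 - exp (-d * (1 - x)) - x
  have hk_anti : StrictAnti k := fun x y hxy => by
    have : exp (-d * (1 - x)) < exp (-d * (1 - y)) := exp_lt_exp.mpr (by nlinarith)
    simp only [k]; linarith
  have hk0 : 0 < k 0 := by
    have : exp (-d * (1 - 0)) < 1 := exp_lt_one_iff.mpr (by linarith)
    simp only [k]; linarith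
  have hk1 : k 1 < 0 := by simp [k]
  obtain ⟨β, hβ, hkβ⟩ := intermediate_value_Ioo' zero_le_one
    (by fun_prop : Continuous k).continuousOn ⟨hk1, hk0⟩
  refine ⟨β, ⟨hβ, by simp only [k] at hkβ; linarith⟩, fun y ⟨_, hy⟩ => hk_anti.injective ?_⟩
  simp only [k, hy, sub_self]
  exact hkβ.symm

theorem phiFn_eq_self_of_fixedPoint (h : 1 - exp (-d * (1 - β)) = β) : phiFn d β = β := by
  rw [phiFn, show exp (-d * (1 - β)) = 1 - β by linarith, h]

theorem one_lt_phiDeriv_of_fixedPoint (hd : exp 1 < d) (h : 1 - exp (-d * (1 - β)) = β) :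
    1 < phiDeriv d β := by
  have hd0 : 0 < d := (exp_pos 1).trans hd
  have hE : exp (-d * (1 - β)) = 1 - β := by linarith
  have ht : 1 < d * (1 - β) := by
    by_contra! ht
    have h1 : exp (-1) ≤ 1 - β := hE ▸ exp_le_exp.mpr (by linarith)
    have h2 : 1 < d * exp (-1) := by
      rw [exp_neg, ← div_eq_mul_inv, one_lt_div (exp_pos 1)]; exact hd
    nlinarith
  rw [phiDeriv, hE, hE]
  nlinarith

end FixedPoints

section ExtremeFixedPoints

variable {d β : ℝ}

def phiFixedPoints (d : ℝ) : Set ℝ := {α | α ∈ Icc (0 : ℝ) 1 ∧ phiFn d α = α}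

theorem isClosed_phiFixedPoints (d : ℝ) : IsClosed (phiFixedPoints d) :=
  isClosed_Icc.inter (isClosed_eq (by unfold phiFn; fun_prop) continuous_id)

theorem alphaMin_mem_phiFixedPoints (h : β ∈ phiFixedPoints d) : alphaMin d ∈ phiFixedPoints d :=
  (isClosed_phiFixedPoints d).csInf_mem ⟨β, h⟩ ⟨0, fun _ hx => hx.1.1⟩

theorem alphaMax_mem_phiFixedPoints (h : β ∈ phiFixedPoints d) : alphaMax d ∈ phiFixedPoints d :=
  (isClosed_phiFixedPoints d).csSup_mem ⟨β, h⟩ ⟨1, fun _ hx => hx.1.2⟩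

theorem alphaMin_le_of_mem_phiFixedPoints (h : β ∈ phiFixedPoints d) : alphaMin d ≤ β :=
  csInf_le ⟨0, fun _ hx => hx.1.1⟩ h

theorem le_alphaMax_of_mem_phiFixedPoints (h : β ∈ phiFixedPoints d) : β ≤ alphaMax d :=
  le_csSup ⟨1, fun _ hx => hx.1.2⟩ h

end ExtremeFixedPoints

section Monotonicity

variable {d a b : ℝ}

theorem strictAntiOn_PhiFn (hd : d ≠ 0) (h : ∀ x ∈ Ioo a b, phiFn d x - x < 0) :
    StrictAntiOn (PhiFn d) (Icc a b) := by
  refine strictAntiOn_of_deriv_neg (convex_Icc a b) (by unfold PhiFn; fun_prop) fun x hx => ?_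
  rw [interior_Icc] at hx
  rw [(hasDerivAt_PhiFn d x).deriv]
  exact mul_neg_of_pos_of_neg (by positivity) (h x hx)

theorem strictMonoOn_PhiFn (hd : d ≠ 0) (h : ∀ x ∈ Ioo a b, 0 < phiFn d x - x) :
    StrictMonoOn (PhiFn d) (Icc a b) := by
  refine strictMonoOn_of_deriv_pos (convex_Icc a b) (by unfold PhiFn; fun_prop) fun x hx => ?_
  rw [interior_Icc] at hx
  rw [(hasDerivAt_PhiFn d x).deriv]
  exact mul_pos (by positivity) (h x hx)

end Monotonicity

/-- for `d > e`, the map `α ↦ 1 − exp(−d(1−α))` has a unique fixed point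
`β ∈ (0,1)`; `β ∈ [α_*, α^*]`, `1 − β = exp(−d(1−β))`, and `β` is the unique local
minimiser of `Φ_d` on `[α_*, α^*]`. -/
theorem statement17 (d : ℝ) (hd : Real.exp 1 < d) :
    ∃ β : ℝ, β ∈ Set.Ioo (0:ℝ) 1 ∧
      1 - Real.exp (-d * (1 - β)) = β ∧
      (∀ β' ∈ Set.Ioo (0:ℝ) 1, 1 - Real.exp (-d * (1 - β')) = β' → β' = β) ∧
      β ∈ Set.Icc (alphaMin d) (alphaMax d) ∧
      1 - β = Real.exp (-d * (1 - β)) ∧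
      (∀ α ∈ Set.Icc (alphaMin d) (alphaMax d),
        (IsLocalMinOn (PhiFn d) (Set.Icc (alphaMin d) (alphaMax d)) α ↔ α = β)) := by
  have hd0 : 0 < d := (exp_pos 1).trans hd
  obtain ⟨β, ⟨hβ, hβfix⟩, huniq⟩ := existsUnique_fixedPoint_one_sub_exp hd0
  have hβS : β ∈ phiFixedPoints d := ⟨Ioo_subset_Icc_self hβ, phiFn_eq_self_of_fixedPoint hβfix⟩
  have hβ' : HasDerivAt (fun x => phiFn d x - x) (phiDeriv d β - 1) β :=
    (hasDerivAt_phiFn d β).sub (hasDerivAt_id β)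
  have hslope : 0 < phiDeriv d β - 1 := sub_pos.mpr (one_lt_phiDeriv_of_fixedPoint hd hβfix)
  have hzero : ∀ x ∈ phiFixedPoints d, phiFn d x - x = 0 := fun x hx => sub_eq_zero.mpr hx.2
  have hneg := neg_of_mem_Ioo_of_strictConvexOn_Iic_of_concaveOn_Ici
    (strictConvexOn_phiFn_sub_id hd0) (strictConcaveOn_phiFn_sub_id hd0).concaveOn
    (hzero _ (alphaMin_mem_phiFixedPoints hβS)) (hzero _ hβS) hβ' hslope
  have hpos := pos_of_mem_Ioo_of_convexOn_Iic_of_strictConcaveOn_Ici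
    (strictConvexOn_phiFn_sub_id hd0).convexOn (strictConcaveOn_phiFn_sub_id hd0)
    (hzero _ hβS) (hzero _ (alphaMax_mem_phiFixedPoints hβS)) hβ' hslope
  have hβI : β ∈ Icc (alphaMin d) (alphaMax d) :=
    ⟨alphaMin_le_of_mem_phiFixedPoints hβS, le_alphaMax_of_mem_phiFixedPoints hβS⟩
  refine ⟨β, hβ, hβfix, fun β' h₁ h₂ => huniq β' ⟨h₁, h₂⟩, hβI, by linarith, fun α hα => ?_⟩
  exact isLocalMinOn_Icc_iff_of_strictAntiOn_of_strictMonoOn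
    (strictAntiOn_PhiFn hd0.ne' hneg) (strictMonoOn_PhiFn hd0.ne' hpos) hβI hα
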